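/- For S > 0, the function f(R) = 2R + (1/2)[S/(e^{2R}−1) − ln(S/(e^{2R}−1)) − 1] defined for R > 0 attains its unique stationary point at R* = (1/2)·ln((S + 5 + √(S² + 10S + 1))/6); equivalently, setting x = e^{2R}, f′(R) = 0 iff 3x² − (S+5)x + 2 = 0 with x > 1. -/

import Mathlib

/-! With `x = e^{2R}`, `f'(R) = (3x² − (S+5)x + 2)/(x − 1)²`. For `S > 0` the quadratic has
discriminant `S² + 10S + 1` and its smaller root `(S + 5 − √(S² + 10S + 1))/6` lies below `1`,
so on `R > 0` (i.e. `x > 1`) the stationary points are exactly `x = (S + 5 + √(S² + 10S + 1))/6`. -/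

open Real

noncomputable def fDiv (S R : ℝ) : ℝ :=
  2 * R + (1 / 2) * (S / (exp (2 * R) - 1) - Real.log (S / (exp (2 * R) - 1)) - 1)

theorem hasDerivAt_fDiv {S R : ℝ} (hS : S ≠ 0) (hR : R ≠ 0) :
    HasDerivAt (fDiv S)
      ((3 * exp (2 * R) ^ 2 - (S + 5) * exp (2 * R) + 2) / (exp (2 * R) - 1) ^ 2) R := by
  have hx : exp (2 * R) - 1 ≠ 0 := by simpa [sub_eq_zero] using hR
  have hu : HasDerivAt (fun R => exp (2 * R) - 1) (exp (2 * R) * 2) R := by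
    simpa using (((hasDerivAt_id R).const_mul 2).exp).sub_const 1
  have hq : HasDerivAt (fun R => S / (exp (2 * R) - 1))
      (-(S * (exp (2 * R) * 2)) / (exp (2 * R) - 1) ^ 2) R := by
    simpa using (hasDerivAt_const R S).fun_div hu hx
  have hlog := hq.log (div_ne_zero hS hx)
  refine (((hasDerivAt_id R).const_mul 2).add
    (((hq.sub hlog).sub_const 1).const_mul (1 / 2))).congr_deriv ?_
  field_simp
  ring

theorem deriv_fDiv_eq_zero_iff {S R : ℝ} (hS : S ≠ 0) (hR : R ≠ 0) :
    deriv (fDiv S) R = 0 ↔ 3 * exp (2 * R) ^ 2 - (S + 5) * exp (2 * R) + 2 = 0 := by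
  have hx : exp (2 * R) - 1 ≠ 0 := by simpa [sub_eq_zero] using hR
  rw [(hasDerivAt_fDiv hS hR).deriv, div_eq_zero_iff, or_iff_left (pow_ne_zero 2 hx)]

theorem quadratic_eq_zero_iff_of_one_lt {S x : ℝ} (hS : 0 < S) (hx : 1 < x) :
    3 * x ^ 2 - (S + 5) * x + 2 = 0 ↔ x = (S + 5 + √(S ^ 2 + 10 * S + 1)) / 6 := by
  set d := √(S ^ 2 + 10 * S + 1)
  have hd : d * d = S ^ 2 + 10 * S + 1 := mul_self_sqrt (by positivity)
  have hdisc : discrim 3 (-(S + 5)) 2 = d * d := by rw [discrim, hd]; ring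
  -- the smaller root is below `1` because `(S - 1)² < S² + 10S + 1` for `S > 0`
  have hsmall : (S + 5 - d) / 6 < x := by nlinarith [sqrt_nonneg (S ^ 2 + 10 * S + 1)]
  have hpoly : 3 * x ^ 2 - (S + 5) * x + 2 = 3 * (x * x) + -(S + 5) * x + 2 := by ring
  rw [hpoly, quadratic_eq_zero_iff (by norm_num) hdisc x, or_iff_left (by norm_num; exact hsmall.ne')]
  norm_num

theorem exp_two_mul_eq_iff {R r : ℝ} (hr : 0 < r) : exp (2 * R) = r ↔ R = 1 / 2 * log r := by
  conv_lhs => rw [← exp_log hr, exp_eq_exp]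
  constructor <;> intro h <;> linarith

/-- For `S > 0`, the function `f(R) = 2R + (1/2)[S/(e^{2R}−1) − ln(S/(e^{2R}−1)) − 1]`,
`R > 0`, has its unique stationary point at
`R* = (1/2)·ln((S + 5 + √(S² + 10S + 1))/6)`; equivalently, with `x = e^{2R}`,
`f′(R) = 0` iff `3x² − (S+5)x + 2 = 0` (with `x > 1`). -/
theorem divergence_bound_stationary (S : ℝ) (hS : 0 < S) :
    ∀ R : ℝ, 0 < R →
      ((deriv (fDiv S) R = 0 ↔
          3 * (exp (2 * R)) ^ 2 - (S + 5) * exp (2 * R) + 2 = 0) ∧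
       (deriv (fDiv S) R = 0 ↔
          R = (1 / 2) * Real.log ((S + 5 + Real.sqrt (S ^ 2 + 10 * S + 1)) / 6))) := by
  intro R hR
  have hstat := deriv_fDiv_eq_zero_iff hS.ne' hR.ne'
  refine ⟨hstat, hstat.trans ?_⟩
  rw [quadratic_eq_zero_iff_of_one_lt hS (one_lt_exp_iff.mpr (by linarith))]
  exact exp_two_mul_eq_iff (by positivity)
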